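/- arXiv:1201.4539 — 7 statements merged into one kernel-verified Lean document; each statement's English description precedes it below -/
import Mathlib

section
/- Let n, m be natural numbers, let a, b ∈ ℤⁿ be column vectors, and let P be an n × m integer matrix. Let A = (a | b | P) be the n × (m+2) integer matrix whose first column is a, second column is b, and remaining columns are those of P. Let A' be the (n+1) × (m+3) integer matrix whose first n rows form the block (a | b | P | 0) (where 0 is a zero column) and whose last row is (2, 1, 0, …, 0, 1), i.e., entry 2 under column a, entry 1 under column b, zeros under the columns of P, and entry 1 in the last column. Then A' is ℤ-equivalent to the block-diagonal matrix A ⊕ (1), i.e., the (n+1) × (m+3) matrix whose first n rows are (a | b | P | 0) and whose last row is (0, 0, …, 0, 1). -/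
namespace Matrix

variable {l m n : Type*} [Fintype l] [DecidableEq l] [Fintype n] [DecidableEq n]

theorem fromBlocks_zero_one_mul_fromBlocks_one_zero_neg_one {R : Type*} [Ring R]
    (A : Matrix m n R) (r : Matrix l n R) :
    (fromBlocks A 0 r 1 : Matrix (m ⊕ l) (n ⊕ l) R) *
        (fromBlocks 1 0 (-r) 1 : Matrix (n ⊕ l) (n ⊕ l) R) =
      fromBlocks A 0 0 1 := by
  simp [fromBlocks_multiply]

/-- Adding multiples of the last columns `(0 | 1)` to the other columns clears the bottom rows. -/
theorem exists_isUnit_det_mul_fromBlocks_zero_one_mul_eq {R : Type*} [CommRing R]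
    [Fintype m] [DecidableEq m] (A : Matrix m n R) (r : Matrix l n R) :
    ∃ (P : Matrix (m ⊕ l) (m ⊕ l) R) (Q : Matrix (n ⊕ l) (n ⊕ l) R),
      IsUnit P.det ∧ IsUnit Q.det ∧
        P * (fromBlocks A 0 r 1 : Matrix (m ⊕ l) (n ⊕ l) R) * Q = fromBlocks A 0 0 1 :=
  ⟨1, fromBlocks 1 0 (-r) 1, by simp, by simp, by
    rw [Matrix.one_mul, fromBlocks_zero_one_mul_fromBlocks_one_zero_neg_one]⟩

end Matrix

theorem reidemeister_I_matrix (n m : ℕ) (a b : Fin n → ℤ)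
    (P : Matrix (Fin n) (Fin m) ℤ) :
    -- `A = (a | b | P)`
    ∀ A : Matrix (Fin n) (Fin 2 ⊕ Fin m) ℤ,
      A = Matrix.fromCols (Matrix.of fun i j => if j = 0 then a i else b i) P →
    -- `A'` : first `n` rows are `(a | b | P | 0)`, last row is `(2, 1, 0, …, 0, 1)`
    ∀ A' : Matrix (Fin n ⊕ Fin 1) ((Fin 2 ⊕ Fin m) ⊕ Fin 1) ℤ,
      A' = Matrix.fromBlocks A 0
        (Matrix.of fun _ =>
          Sum.elim (fun j : Fin 2 => if j = 0 then (2 : ℤ) else 1) (fun _ => 0)) 1 →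
    -- `A'` is ℤ-equivalent to `A ⊕ (1)`
    ∃ (P' : Matrix (Fin n ⊕ Fin 1) (Fin n ⊕ Fin 1) ℤ)
      (Q' : Matrix ((Fin 2 ⊕ Fin m) ⊕ Fin 1) ((Fin 2 ⊕ Fin m) ⊕ Fin 1) ℤ),
      IsUnit P'.det ∧ IsUnit Q'.det ∧ P' * A' * Q' = Matrix.fromBlocks A 0 0 1 := by
  rintro A - A' rfl
  exact Matrix.exists_isUnit_det_mul_fromBlocks_zero_one_mul_eq A _
end

section
/- Let n, m be natural numbers, let a, b', b'', c ∈ ℤⁿ be column vectors, set b = b' + b'', and let P be an n × m integer matrix. Let A = (a | b | c | P) be the n × (m+3) integer matrix with columns a, b, c followed by the columns of P. Let A' be the (n+2) × (m+5) integer matrix whose first n rows form the block (a | b' | c | P | b'' | 0), whose (n+1)-st row is (1, 1, 1, 0, …, 0, 0, 1) (entries 1 under columns a, b', c, zeros under P and b'', entry 1 in the last column), and whose (n+2)-nd row is (1, 0, 1, 0, …, 0, 1, 1) (entry 1 under a, 0 under b', 1 under c, zeros under P, entry 1 under b'', entry 1 in the last column). Then A' is ℤ-equivalent to the block-diagonal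 matrix A ⊕ (1) ⊕ (1), i.e., the (n+2) × (m+5) matrix whose first n rows are (a | b | c | P | 0 | 0) and whose last two rows are (0,…,0,1,0) and (0,…,0,0,1). -/
/-! Clearing the off-diagonal blocks of `(M X; R S)` with the invertible corner `S` reduces it,
up to ℤ-equivalence, to the Schur complement `M - X S⁻¹ R` bordered by an identity block. For `A'`
the corner is `S = (0 1; 1 1)`, and `X S⁻¹ R` has `-b''` in the column of `b'` and zeros elsewhere;
so the Schur complement is `(a | b' + b'' | c | P) = A`. -/

namespace Matrix

variable {l m n R : Type*} [Fintype l] [Fintype m] [Fintype n]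
  [DecidableEq l] [DecidableEq m] [DecidableEq n] [CommRing R]

theorem fromBlocks_one_neg_zero_one_mul_fromBlocks_mul_fromBlocks_one_zero_neg
    (A : Matrix m n R) (B : Matrix m l R) (C : Matrix l n R) (D E : Matrix l l R)
    (hED : E * D = 1) :
    fromBlocks (1 : Matrix m m R) (-(B * E)) (0 : Matrix l m R) 1 * fromBlocks A B C D *
        fromBlocks (1 : Matrix n n R) 0 (-(E * C)) E =
      fromBlocks (A - B * E * C) 0 0 1 := by
  have hDE : D * E = 1 := mul_eq_one_comm.mp hED
  have hBED : B * E * D = B := by rw [Matrix.mul_assoc, hED, Matrix.mul_one]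
  have hDEC : D * (E * C) = C := by rw [← Matrix.mul_assoc, hDE, Matrix.one_mul]
  simp only [fromBlocks_multiply, Matrix.one_mul, Matrix.mul_one, Matrix.zero_mul,
    Matrix.mul_zero, zero_add, add_zero, Matrix.neg_mul, Matrix.mul_neg, hBED, hDEC,
    hDE, add_neg_cancel, ← sub_eq_add_neg, sub_zero]

theorem exists_isUnit_det_mul_fromBlocks_mul_eq_fromBlocks_schur
    (A : Matrix m n R) (B : Matrix m l R) (C : Matrix l n R) (D E : Matrix l l R)
    (hED : E * D = 1) :
    ∃ (U : Matrix (m ⊕ l) (m ⊕ l) R) (V : Matrix (n ⊕ l) (n ⊕ l) R),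
      IsUnit U.det ∧ IsUnit V.det ∧
        U * fromBlocks A B C D * V = fromBlocks (A - B * E * C) 0 0 1 := by
  refine ⟨fromBlocks 1 (-(B * E)) 0 1, fromBlocks 1 0 (-(E * C)) E, ?_, ?_,
    fromBlocks_one_neg_zero_one_mul_fromBlocks_mul_fromBlocks_one_zero_neg A B C D E hED⟩
  · simp
  · rw [det_fromBlocks_zero₁₂, det_one, one_mul]
    exact isUnit_det_of_right_inverse hED

end Matrix

theorem reidemeister_II_schur_complement {n m : ℕ} (a b' b'' c : Fin n → ℤ)
    (P : Matrix (Fin n) (Fin m) ℤ) :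
    Matrix.fromCols (Matrix.of fun i => ![a i, b' i, c i]) P -
        Matrix.of (fun i => ![b'' i, 0]) * !![-1, 1; 1, 0] *
          Matrix.fromCols (!![1, 1, 1; 1, 0, 1] : Matrix (Fin 2) (Fin 3) ℤ) 0 =
      Matrix.fromCols (Matrix.of fun i => ![a i, b' i + b'' i, c i]) P := by
  ext i (k | k)
  · fin_cases k <;> simp [Matrix.mul_apply, Fin.sum_univ_two]
  · simp

theorem reidemeister_II_matrix (n m : ℕ) (a b' b'' c : Fin n → ℤ)
    (b : Fin n → ℤ) (hb : b = b' + b'')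
    (P : Matrix (Fin n) (Fin m) ℤ) :
    -- `A = (a | b | c | P)`
    ∀ A : Matrix (Fin n) (Fin 3 ⊕ Fin m) ℤ,
      A = Matrix.fromCols (Matrix.of fun i => ![a i, b i, c i]) P →
    -- `A'` : first `n` rows are `(a | b' | c | P | b'' | 0)`, the next row is
    -- `(1,1,1,0,…,0,0,1)` and the last row is `(1,0,1,0,…,0,1,1)`
    ∀ A' : Matrix (Fin n ⊕ Fin 2) ((Fin 3 ⊕ Fin m) ⊕ Fin 2) ℤ,
      A' = Matrix.fromBlocks
        (Matrix.fromCols (Matrix.of fun i => ![a i, b' i, c i]) P)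
        (Matrix.of fun i => ![b'' i, 0])
        (Matrix.fromCols (!![1,1,1;1,0,1] : Matrix (Fin 2) (Fin 3) ℤ) 0)
        (!![0,1;1,1] : Matrix (Fin 2) (Fin 2) ℤ) →
    -- `A'` is ℤ-equivalent to `A ⊕ (1) ⊕ (1)`
    ∃ (P' : Matrix (Fin n ⊕ Fin 2) (Fin n ⊕ Fin 2) ℤ)
      (Q' : Matrix ((Fin 3 ⊕ Fin m) ⊕ Fin 2) ((Fin 3 ⊕ Fin m) ⊕ Fin 2) ℤ),
      IsUnit P'.det ∧ IsUnit Q'.det ∧ P' * A' * Q' = Matrix.fromBlocks A 0 0 1 := by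
  rintro A rfl A' rfl
  have hinv : (!![-1, 1; 1, 0] : Matrix (Fin 2) (Fin 2) ℤ) * !![0, 1; 1, 1] = 1 := by
    rw [Matrix.one_fin_two]
    norm_num [Matrix.mul_fin_two]
  obtain ⟨U, V, hU, hV, hUV⟩ :=
    Matrix.exists_isUnit_det_mul_fromBlocks_mul_eq_fromBlocks_schur
      (Matrix.fromCols (Matrix.of fun i => ![a i, b' i, c i]) P) (Matrix.of fun i => ![b'' i, 0])
      (Matrix.fromCols (!![1,1,1;1,0,1] : Matrix (Fin 2) (Fin 3) ℤ) 0) _ _ hinv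
  refine ⟨U, V, hU, hV, ?_⟩
  rw [hUV, reidemeister_II_schur_complement, hb]
  rfl
end

section
/- Let n, m be natural numbers, let a, b, c, d, e, f ∈ ℤⁿ be column vectors, and let P be an n × m integer matrix. Let M be the (n+3) × (m+7) integer matrix whose first n rows form the block (a | b | c | d | e | f | 0 | P) (where 0 is a zero column) and whose last three rows are (1,1,0,1,0,0,1,0,…,0), (0,1,1,0,1,0,1,0,…,0), and (0,0,0,1,1,1,1,0,…,0) (zeros under the columns of P). Let M' be the (n+3) × (m+7) integer matrix with the same first n rows (a | b | c | d | e | f | 0 | P) and whose last three rows are (0,0,1,0,1,1,1,0,…,0), (1,0,0,1,0,1,1,0,…,0), and (1,1,1,0,0,0,1,0,…,0). Then M is ℤ-equivalent to M'. -/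
/-!
Column 7 (index `6 : Fin 7`) vanishes in the top block and is all ones in the bottom block.
Adding `±(column 7)` to columns 1–6 is therefore invisible in the top rows and adds
`(1,1,1,-1,-1,-1,0)` to each of the three bottom rows; the unimodular row operations
`r₁ ↦ 2r₃ - r₁`, `r₂ ↦ 2r₃ - r₂` then turn the bottom block into that of `M'`.
-/

namespace Matrix

theorem det_one_add_vecMulVec {R l : Type*} [CommRing R] [Fintype l] [DecidableEq l]
    (u v : l → R) : det (1 + vecMulVec u v) = 1 + v ⬝ᵥ u := by
  rw [vecMulVec_eq (ι := Unit), det_one_add_replicateCol_mul_replicateRow]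

theorem mul_one_add_vecMulVec_of_mulVec_eq_zero {R l n : Type*} [Semiring R] [Fintype l]
    [DecidableEq l] (A : Matrix n l R) {u : l → R} (hu : A *ᵥ u = 0) (v : l → R) :
    A * (1 + vecMulVec u v) = A := by
  rw [Matrix.mul_add, Matrix.mul_one, mul_vecMulVec, hu, zero_vecMulVec, add_zero]

theorem exists_isUnit_det_mul_fromBlocks_zero₂₂_mul {R l m n o : Type*} [CommRing R]
    [Fintype l] [Fintype m] [Fintype n] [Fintype o] [DecidableEq l] [DecidableEq m]
    [DecidableEq n] [DecidableEq o] {A : Matrix n l R} {P : Matrix n o R} {B B' : Matrix m l R}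
    (U : Matrix m m R) (V : Matrix l l R) (hU : IsUnit U.det) (hV : IsUnit V.det)
    (hA : A * V = A) (hB : U * B * V = B') :
    ∃ (P' : Matrix (n ⊕ m) (n ⊕ m) R) (Q' : Matrix (l ⊕ o) (l ⊕ o) R),
      IsUnit P'.det ∧ IsUnit Q'.det ∧ P' * fromBlocks A P B 0 * Q' = fromBlocks A P B' 0 := by
  refine ⟨fromBlocks 1 0 0 U, fromBlocks V 0 0 1, ?_, ?_, ?_⟩
  · simpa [det_fromBlocks_zero₂₁] using hU
  · simpa [det_fromBlocks_zero₂₁] using hV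
  · simp [fromBlocks_multiply, hA, ← hB, Matrix.mul_assoc]

end Matrix

open Matrix

namespace ReidemeisterIII

def columnShift : Matrix (Fin 7) (Fin 7) ℤ :=
  1 + vecMulVec (Pi.single 6 1) ![1, 1, 1, -1, -1, -1, 0]

def rowShift : Matrix (Fin 3) (Fin 3) ℤ := !![-1, 0, 2; 0, -1, 2; 0, 0, 1]

theorem isUnit_det_columnShift : IsUnit columnShift.det := by
  rw [columnShift, det_one_add_vecMulVec]
  decide

theorem isUnit_det_rowShift : IsUnit rowShift.det := by decide

theorem topBlock_mul_columnShift {n : ℕ} (a b c d e f : Fin n → ℤ) :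
    (of fun i => ![a i, b i, c i, d i, e i, f i, 0]) * columnShift =
      of fun i => ![a i, b i, c i, d i, e i, f i, 0] :=
  mul_one_add_vecMulVec_of_mulVec_eq_zero _ (by rw [mulVec_single_one]; rfl) _

theorem rowShift_mul_mul_columnShift :
    rowShift * (!![1,1,0,1,0,0,1; 0,1,1,0,1,0,1; 0,0,0,1,1,1,1] : Matrix (Fin 3) (Fin 7) ℤ) *
        columnShift = !![0,0,1,0,1,1,1; 1,0,0,1,0,1,1; 1,1,1,0,0,0,1] := by
  decide

end ReidemeisterIII

theorem reidemeister_III_matrix (n m : ℕ) (a b c d e f : Fin n → ℤ)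
    (P : Matrix (Fin n) (Fin m) ℤ) :
    -- `M` : first `n` rows are `(a | b | c | d | e | f | 0 | P)`, last three rows are
    -- `(1,1,0,1,0,0,1,0,…,0)`, `(0,1,1,0,1,0,1,0,…,0)`, `(0,0,0,1,1,1,1,0,…,0)`
    ∀ M : Matrix (Fin n ⊕ Fin 3) (Fin 7 ⊕ Fin m) ℤ,
      M = Matrix.fromBlocks
        (Matrix.of fun i => ![a i, b i, c i, d i, e i, f i, 0]) P
        (!![1,1,0,1,0,0,1; 0,1,1,0,1,0,1; 0,0,0,1,1,1,1] : Matrix (Fin 3) (Fin 7) ℤ) 0 →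
    -- `M'` : same first `n` rows, last three rows are
    -- `(0,0,1,0,1,1,1,0,…,0)`, `(1,0,0,1,0,1,1,0,…,0)`, `(1,1,1,0,0,0,1,0,…,0)`
    ∀ M' : Matrix (Fin n ⊕ Fin 3) (Fin 7 ⊕ Fin m) ℤ,
      M' = Matrix.fromBlocks
        (Matrix.of fun i => ![a i, b i, c i, d i, e i, f i, 0]) P
        (!![0,0,1,0,1,1,1; 1,0,0,1,0,1,1; 1,1,1,0,0,0,1] : Matrix (Fin 3) (Fin 7) ℤ) 0 →
    -- `M` is ℤ-equivalent to `M'`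
    ∃ (P' : Matrix (Fin n ⊕ Fin 3) (Fin n ⊕ Fin 3) ℤ)
      (Q' : Matrix (Fin 7 ⊕ Fin m) (Fin 7 ⊕ Fin m) ℤ),
      IsUnit P'.det ∧ IsUnit Q'.det ∧ P' * M * Q' = M' := by
  rintro M rfl M' rfl
  exact exists_isUnit_det_mul_fromBlocks_zero₂₂_mul ReidemeisterIII.rowShift
    ReidemeisterIII.columnShift ReidemeisterIII.isUnit_det_rowShift
    ReidemeisterIII.isUnit_det_columnShift (ReidemeisterIII.topBlock_mul_columnShift a b c d e f)
    ReidemeisterIII.rowShift_mul_mul_columnShift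
end

section
/- Let A be the 5 × 7 integer matrix with rows (1,1,1,0,0,0,1), (1,1,0,1,0,0,1), (1,0,1,0,1,0,1), (1,0,0,1,0,1,1), (1,0,0,0,1,1,1). Then for every b ∈ ℤ⁵ there exists u ∈ ℤ⁷ such that A · u = b; explicitly, u = (b₁−b₂−b₃+b₄+b₅, b₂−b₄, b₃−b₅, −b₁+b₂+b₃−b₅, −b₁+b₂+b₃−b₄, 0, 0) is such a solution. -/
theorem torus_51 (b : Fin 5 → ℤ) :
    (∃ u : Fin 7 → ℤ,
      (!![1,1,1,0,0,0,1; 1,1,0,1,0,0,1; 1,0,1,0,1,0,1; 1,0,0,1,0,1,1; 1,0,0,0,1,1,1] : Matrix (Fin 5) (Fin 7) ℤ).mulVec u = b) ∧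
    (!![1,1,1,0,0,0,1; 1,1,0,1,0,0,1; 1,0,1,0,1,0,1; 1,0,0,1,0,1,1; 1,0,0,0,1,1,1] : Matrix (Fin 5) (Fin 7) ℤ).mulVec
      ![b 0 - b 1 - b 2 + b 3 + b 4, b 1 - b 3, b 2 - b 4, -b 0 + b 1 + b 2 - b 4, -b 0 + b 1 + b 2 - b 3, 0, 0] = b := by
  have h : (!![1,1,1,0,0,0,1; 1,1,0,1,0,0,1; 1,0,1,0,1,0,1; 1,0,0,1,0,1,1; 1,0,0,0,1,1,1] : Matrix (Fin 5) (Fin 7) ℤ).mulVec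
      ![b 0 - b 1 - b 2 + b 3 + b 4, b 1 - b 3, b 2 - b 4, -b 0 + b 1 + b 2 - b 4, -b 0 + b 1 + b 2 - b 3, 0, 0] = b := by
    funext i
    fin_cases i <;>
      simp [Matrix.mulVec, dotProduct, Fin.sum_univ_succ] <;> ring
  exact ⟨⟨_, h⟩, h⟩
end

section
/- Let A be the 6 × 8 integer matrix with rows (1,1,1,0,0,0,1,0), (1,0,1,0,0,1,1,0), (1,1,0,1,1,0,0,0), (0,1,0,1,1,0,1,0), (1,0,0,0,0,1,1,1), (1,0,0,0,1,0,1,1). Then for every b ∈ ℤ⁶ there exists u ∈ ℤ⁸ such that A · u = b; explicitly, u = (b₃−b₄, b₁−b₂−b₃+b₄+b₅, b₂−b₅, −b₁+b₂+2b₃−b₄−b₅−b₆, −b₃+b₄+b₆, −b₃+b₄+b₅, 0, 0) is such a solution. -/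
private lemma knot61_v5 {α : Type*} (a b c d e f g h : α) : ![a,b,c,d,e,f,g,h] 5 = f := rfl
private lemma knot61_v6 {α : Type*} (a b c d e f g h : α) : ![a,b,c,d,e,f,g,h] 6 = g := rfl
private lemma knot61_v7 {α : Type*} (a b c d e f g h : α) : ![a,b,c,d,e,f,g,h] 7 = h := rfl
private lemma knot61_cv5 {α : Type*} (a : α) (s : Fin 5 → α) : Matrix.vecCons a s 5 = s 4 := rfl
private lemma knot61_cv4 {α : Type*} (a : α) (s : Fin 4 → α) : Matrix.vecCons a s 4 = s 3 := rfl
private lemma knot61_cv3 {α : Type*} (a : α) (s : Fin 3 → α) : Matrix.vecCons a s 3 = s 2 := rfl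
private lemma knot61_cv2 {α : Type*} (a : α) (s : Fin 2 → α) : Matrix.vecCons a s 2 = s 1 := rfl
private lemma knot61_cv1 {α : Type*} (a : α) (s : Fin 1 → α) : Matrix.vecCons a s 1 = s 0 := rfl

theorem knot_61 (b : Fin 6 → ℤ) :
    (∃ u : Fin 8 → ℤ,
      (!![1,1,1,0,0,0,1,0; 1,0,1,0,0,1,1,0; 1,1,0,1,1,0,0,0; 0,1,0,1,1,0,1,0; 1,0,0,0,0,1,1,1; 1,0,0,0,1,0,1,1] : Matrix (Fin 6) (Fin 8) ℤ).mulVec u = b) ∧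
    (!![1,1,1,0,0,0,1,0; 1,0,1,0,0,1,1,0; 1,1,0,1,1,0,0,0; 0,1,0,1,1,0,1,0; 1,0,0,0,0,1,1,1; 1,0,0,0,1,0,1,1] : Matrix (Fin 6) (Fin 8) ℤ).mulVec
      ![b 2 - b 3, b 0 - b 1 - b 2 + b 3 + b 4, b 1 - b 4, -b 0 + b 1 + 2*b 2 - b 3 - b 4 - b 5, -b 2 + b 3 + b 5, -b 2 + b 3 + b 4, 0, 0] = b := by
  have h : (!![1,1,1,0,0,0,1,0; 1,0,1,0,0,1,1,0; 1,1,0,1,1,0,0,0; 0,1,0,1,1,0,1,0; 1,0,0,0,0,1,1,1; 1,0,0,0,1,0,1,1] : Matrix (Fin 6) (Fin 8) ℤ).mulVec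
      ![b 2 - b 3, b 0 - b 1 - b 2 + b 3 + b 4, b 1 - b 4, -b 0 + b 1 + 2*b 2 - b 3 - b 4 - b 5, -b 2 + b 3 + b 5, -b 2 + b 3 + b 4, 0, 0] = b := by
    funext i
    fin_cases i <;>
      · show _ = _
        simp [Matrix.mulVec, dotProduct, Fin.sum_univ_eight, knot61_v5, knot61_v6,
          knot61_v7, knot61_cv5, knot61_cv4, knot61_cv3, knot61_cv2, knot61_cv1]
        ring
  exact ⟨⟨_, h⟩, h⟩
end

section
/- Let A be the 6 × 8 integer matrix with rows (1,1,1,0,0,0,1,0), (1,1,0,1,1,0,0,0), (0,1,0,0,1,1,1,0), (1,0,1,0,0,0,1,1), (1,0,0,1,1,1,0,0), (1,0,0,0,0,1,1,1). Then for every b ∈ ℤ⁶ there exists u ∈ ℤ⁸ such that A · u = b; explicitly, u = (−b₁+b₂+b₄−b₅+b₆, b₁−b₄, b₁−b₂+b₅−b₆, 2b₁−b₂−b₃−2b₄+2b₅−b₆, −2b₁+b₂+b₃+2b₄−b₅, b₁−b₂−b₄+b₅, 0, 0) is such a solution. -/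
theorem knot_62 (b : Fin 6 → ℤ) :
    (∃ u : Fin 8 → ℤ,
      (!![1,1,1,0,0,0,1,0; 1,1,0,1,1,0,0,0; 0,1,0,0,1,1,1,0; 1,0,1,0,0,0,1,1; 1,0,0,1,1,1,0,0; 1,0,0,0,0,1,1,1] : Matrix (Fin 6) (Fin 8) ℤ).mulVec u = b) ∧
    (!![1,1,1,0,0,0,1,0; 1,1,0,1,1,0,0,0; 0,1,0,0,1,1,1,0; 1,0,1,0,0,0,1,1; 1,0,0,1,1,1,0,0; 1,0,0,0,0,1,1,1] : Matrix (Fin 6) (Fin 8) ℤ).mulVec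
      ![-b 0 + b 1 + b 3 - b 4 + b 5, b 0 - b 3, b 0 - b 1 + b 4 - b 5, 2*b 0 - b 1 - b 2 - 2*b 3 + 2*b 4 - b 5, -2*b 0 + b 1 + b 2 + 2*b 3 - b 4, b 0 - b 1 - b 3 + b 4, 0, 0] = b := by
  have h : (!![1,1,1,0,0,0,1,0; 1,1,0,1,1,0,0,0; 0,1,0,0,1,1,1,0; 1,0,1,0,0,0,1,1; 1,0,0,1,1,1,0,0; 1,0,0,0,0,1,1,1] : Matrix (Fin 6) (Fin 8) ℤ).mulVec
      ![-b 0 + b 1 + b 3 - b 4 + b 5, b 0 - b 3, b 0 - b 1 + b 4 - b 5, 2*b 0 - b 1 - b 2 - 2*b 3 + 2*b 4 - b 5, -2*b 0 + b 1 + b 2 + 2*b 3 - b 4, b 0 - b 1 - b 3 + b 4, 0, 0] = b := by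
    funext i
    fin_cases i <;>
      simp [Matrix.mulVec, dotProduct, Fin.sum_univ_succ, Matrix.cons_val_succ, Matrix.cons_val_four, show (5:Fin 6) = Fin.succ 4 from rfl] <;> ring
  exact ⟨⟨_, h⟩, h⟩
end

section
/- Let A be the 6 × 8 integer matrix with rows (1,1,1,1,0,0,0,0), (1,1,0,0,1,1,0,0), (0,1,0,1,1,0,0,1), (0,0,1,1,0,0,1,1), (1,0,0,0,1,1,0,1), (1,0,1,0,0,0,1,1). Then for every b ∈ ℤ⁶ there exists u ∈ ℤ⁸ such that A · u = b; explicitly, u = (b₁−b₂−b₄+b₅, b₂−b₅, −b₁+b₂+b₄−b₅+b₆, b₁−b₂+b₅−b₆, −b₁+b₃+b₆, b₂−b₃+b₄−b₆, 0, 0) is such a solution. -/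
namespace KnotAux
open Matrix

@[simp] lemma cons_val_five {α : Type*} {m : ℕ} (x : α) (u : Fin m.succ.succ.succ.succ.succ → α) :
    vecCons x u 5 = vecHead (vecTail (vecTail (vecTail (vecTail u)))) := rfl

@[simp] lemma cons_val_six {α : Type*} {m : ℕ} (x : α) (u : Fin m.succ.succ.succ.succ.succ.succ → α) :
    vecCons x u 6 = vecHead (vecTail (vecTail (vecTail (vecTail (vecTail u))))) := rfl

@[simp] lemma cons_val_seven {α : Type*} {m : ℕ} (x : α) (u : Fin m.succ.succ.succ.succ.succ.succ.succ → α) :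
    vecCons x u 7 = vecHead (vecTail (vecTail (vecTail (vecTail (vecTail (vecTail u)))))) := rfl

end KnotAux

open KnotAux

theorem knot_63 (b : Fin 6 → ℤ) :
    (∃ u : Fin 8 → ℤ,
      (!![1,1,1,1,0,0,0,0; 1,1,0,0,1,1,0,0; 0,1,0,1,1,0,0,1; 0,0,1,1,0,0,1,1; 1,0,0,0,1,1,0,1; 1,0,1,0,0,0,1,1] : Matrix (Fin 6) (Fin 8) ℤ).mulVec u = b) ∧
    (!![1,1,1,1,0,0,0,0; 1,1,0,0,1,1,0,0; 0,1,0,1,1,0,0,1; 0,0,1,1,0,0,1,1; 1,0,0,0,1,1,0,1; 1,0,1,0,0,0,1,1] : Matrix (Fin 6) (Fin 8) ℤ).mulVec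
      ![b 0 - b 1 - b 3 + b 4, b 1 - b 4, -b 0 + b 1 + b 3 - b 4 + b 5, b 0 - b 1 + b 4 - b 5, -b 0 + b 2 + b 5, b 1 - b 2 + b 3 - b 5, 0, 0] = b := by
  have h : (!![1,1,1,1,0,0,0,0; 1,1,0,0,1,1,0,0; 0,1,0,1,1,0,0,1; 0,0,1,1,0,0,1,1; 1,0,0,0,1,1,0,1; 1,0,1,0,0,0,1,1] : Matrix (Fin 6) (Fin 8) ℤ).mulVec
      ![b 0 - b 1 - b 3 + b 4, b 1 - b 4, -b 0 + b 1 + b 3 - b 4 + b 5, b 0 - b 1 + b 4 - b 5, -b 0 + b 2 + b 5, b 1 - b 2 + b 3 - b 5, 0, 0] = b := by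
    funext i
    fin_cases i <;>
      simp [Matrix.mulVec, dotProduct, Fin.sum_univ_succ] <;> ring
  exact ⟨⟨_, h⟩, h⟩
end
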